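/- arXiv:math/0406124 — 7 statements merged into one kernel-verified Lean document; each statement's English description precedes it below -/
import Mathlib

section
/- For integers n ≥ 2 and t ≥ i ≥ 1, one has ((n-1)/(n+t-1)) · ((t-i)/(n+t-i))^i · C(n+t-1, t) ≤ C(n+t-i-2, t-i) ≤ (t/n)^i · C(n+t-1, t). -/
/-!
With `N = n + t - 1`, the identity `C(N, t) · t^(i) = N^(i) · C(N - i, t - i)` (falling
factorials) writes `C(N - i, t - i) / C(N, t)` as the product of the ratios `(t - j) / (N - j)`,
`j < i`, each of which lies between `(t - i) / (n + t - i)` and `t / n`. Passing from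
`C(N - i, t - i)` to `C(N - i - 1, t - i)` multiplies by `(n - 1) / (N - i)`, which is at most `1`
and at least `(n - 1) / N`.
-/

namespace Nat

theorem choose_mul_descFactorial (N k i : ℕ) (hik : i ≤ k) :
    N.choose k * k.descFactorial i = N.descFactorial i * (N - i).choose (k - i) := by
  rw [descFactorial_eq_factorial_mul_choose, descFactorial_eq_factorial_mul_choose,
    mul_left_comm, choose_mul hik, mul_assoc]

theorem pow_mul_descFactorial_le_pow_mul_descFactorial {a b c d i : ℕ}
    (h : ∀ j < i, a * (c - j) ≤ b * (d - j)) :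
    a ^ i * c.descFactorial i ≤ b ^ i * d.descFactorial i := by
  induction i with
  | zero => simp
  | succ i ih =>
    calc a ^ (i + 1) * c.descFactorial (i + 1)
        = a ^ i * c.descFactorial i * (a * (c - i)) := by rw [descFactorial_succ]; ring
      _ ≤ b ^ i * d.descFactorial i * (b * (d - i)) :=
        Nat.mul_le_mul (ih fun j hj => h j (by omega)) (h i (by omega))
      _ = b ^ (i + 1) * d.descFactorial (i + 1) := by rw [descFactorial_succ]; ring

theorem choose_mul_sub (m k : ℕ) : m.choose k * (m - k) = m * (m - 1).choose k := by
  cases m with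
  | zero => simp
  | succ m => rw [← choose_mul_succ_eq, Nat.add_sub_cancel, Nat.mul_comm]

end Nat

theorem pow_mul_choose_sub_le_pow_mul_choose {n t i : ℕ} (hn : 0 < n) (hit : i ≤ t) :
    n ^ i * (n + t - 1 - i).choose (t - i) ≤ t ^ i * (n + t - 1).choose t := by
  have hdesc : n ^ i * t.descFactorial i ≤ t ^ i * (n + t - 1).descFactorial i :=
    Nat.pow_mul_descFactorial_le_pow_mul_descFactorial fun j hj =>
      calc n * (t - j) = (t - j) * n := Nat.mul_comm _ _
        _ ≤ t * (n + t - 1 - j) := Nat.mul_le_mul (Nat.sub_le _ _) (by omega)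
  refine Nat.le_of_mul_le_mul_right ?_ (Nat.descFactorial_pos.2 (show i ≤ n + t - 1 by omega))
  calc n ^ i * (n + t - 1 - i).choose (t - i) * (n + t - 1).descFactorial i
      = n ^ i * ((n + t - 1).choose t * t.descFactorial i) := by
        rw [Nat.choose_mul_descFactorial _ _ _ hit]; ring
    _ ≤ t ^ i * (n + t - 1).descFactorial i * (n + t - 1).choose t := by
        rw [← mul_assoc, mul_right_comm]; exact Nat.mul_le_mul_right _ hdesc
    _ = _ := by ring

theorem sub_one_mul_pow_mul_choose_le {n t i : ℕ} (hit : i ≤ t) :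
    (n - 1) * (t - i) ^ i * (n + t - 1).choose t
      ≤ (n + t - 1) * (n + t - i) ^ i * (n + t - i - 2).choose (t - i) := by
  have hdesc : (t - i) ^ i * (n + t - 1).descFactorial i ≤ (n + t - i) ^ i * t.descFactorial i :=
    Nat.pow_mul_descFactorial_le_pow_mul_descFactorial fun j hj => by
      have hjt : j ≤ t := by omega
      zify [hit, hjt, show 1 ≤ n + t by omega, show j ≤ n + t - 1 by omega,
        show i ≤ n + t by omega]
      nlinarith
  have hpred : (n + t - 1 - i).choose (t - i) * (n - 1)
      = (n + t - 1 - i) * (n + t - i - 2).choose (t - i) := by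
    rw [← show n + t - 1 - i - (t - i) = n - 1 by omega, Nat.choose_mul_sub,
      show n + t - 1 - i - 1 = n + t - i - 2 by omega]
  refine Nat.le_of_mul_le_mul_right ?_ (Nat.descFactorial_pos.2 hit)
  calc (n - 1) * (t - i) ^ i * (n + t - 1).choose t * t.descFactorial i
      = (t - i) ^ i * (n + t - 1).descFactorial i
          * ((n + t - 1 - i).choose (t - i) * (n - 1)) := by
        rw [mul_assoc _ _ (t.descFactorial i), Nat.choose_mul_descFactorial _ _ _ hit]; ring
    _ ≤ (n + t - i) ^ i * t.descFactorial i * ((n + t - 1) * (n + t - i - 2).choose (t - i)) := by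
        rw [hpred]
        exact Nat.mul_le_mul hdesc (Nat.mul_le_mul_right _ (Nat.sub_le _ _))
    _ = _ := by ring

theorem stmt1_general (n t i : ℕ) (hn : 2 ≤ n) (hit : i ≤ t) :
    ((((n - 1 : ℕ) : ℚ) / ((n + t - 1 : ℕ) : ℚ))
        * (((t - i : ℕ) : ℚ) / ((n + t - i : ℕ) : ℚ)) ^ i * ((n + t - 1).choose t : ℚ)
      ≤ ((n + t - i - 2).choose (t - i) : ℚ))
    ∧ (((n + t - i - 2).choose (t - i) : ℚ)
      ≤ ((t : ℚ) / (n : ℚ)) ^ i * ((n + t - 1).choose t : ℚ)) := by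
  have hpos₁ : (0 : ℚ) < ((n + t - 1 : ℕ) : ℚ) := mod_cast (show 0 < n + t - 1 by omega)
  have hpos₂ : (0 : ℚ) < ((n + t - i : ℕ) : ℚ) := mod_cast (show 0 < n + t - i by omega)
  constructor
  · rw [div_pow, div_mul_div_comm, div_mul_eq_mul_div, div_le_iff₀' (by positivity)]
    exact_mod_cast sub_one_mul_pow_mul_choose_le hit
  · have hmono : (n + t - i - 2).choose (t - i) ≤ (n + t - 1 - i).choose (t - i) :=
      Nat.choose_le_choose _ (by omega)
    rw [div_pow, div_mul_eq_mul_div, le_div_iff₀' (by positivity)]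
    exact_mod_cast (Nat.mul_le_mul_left _ hmono).trans
      (pow_mul_choose_sub_le_pow_mul_choose (by omega) hit)

/-- For integers `n ≥ 2` and `t ≥ i ≥ 1`,
`((n-1)/(n+t-1)) · ((t-i)/(n+t-i))^i · C(n+t-1, t) ≤ C(n+t-i-2, t-i) ≤ (t/n)^i · C(n+t-1, t)`
over the rationals. -/
theorem stmt1 (n t i : ℕ) (hn : 2 ≤ n) (hi : 1 ≤ i) (hit : i ≤ t) :
    ((((n - 1 : ℕ) : ℚ) / ((n + t - 1 : ℕ) : ℚ))
        * (((t - i : ℕ) : ℚ) / ((n + t - i : ℕ) : ℚ)) ^ i * ((n + t - 1).choose t : ℚ)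
      ≤ ((n + t - i - 2).choose (t - i) : ℚ))
    ∧ (((n + t - i - 2).choose (t - i) : ℚ)
      ≤ ((t : ℚ) / (n : ℚ)) ^ i * ((n + t - 1).choose t : ℚ)) :=
  stmt1_general n t i hn hit
end

section
/- Under the uniform distribution on configurations of t pebbles on n vertices, for any fixed vertex v and integer i ≥ 1 with i ≤ t, the probability that v receives exactly i pebbles is at most (t/n)^i. -/
/-- Key arithmetic inequality, subtraction-free form: with `n = m+2`, `t = i+j`,
`(n+t-i-2).choose (t-i) * n^i ≤ t^i * (n+t-1).choose t`. -/
lemma stmt3_key (m : ℕ) : ∀ i, 1 ≤ i → ∀ j,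
    (m + j).choose j * (m + 2) ^ i ≤ (i + j) ^ i * (m + i + j + 1).choose (i + j) := by
  intro i hi
  induction i, hi using Nat.le_induction with
  | base =>
    intro j
    have h1 : (m + j + 2) * (m + j + 1).choose j = (m + j + 2).choose (j + 1) * (j + 1) :=
      Nat.add_one_mul_choose_eq (m + j + 1) j
    have h2 : (m + j).choose j ≤ (m + j + 1).choose j := Nat.choose_le_choose j (by omega)
    have h3 : (m + j).choose j * (m + 2) ≤ (m + j + 1).choose j * (m + j + 2) :=
      Nat.mul_le_mul h2 (by omega)
    calc (m + j).choose j * (m + 2) ^ 1 = (m + j).choose j * (m + 2) := by ring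
      _ ≤ (m + j + 1).choose j * (m + j + 2) := h3
      _ = (m + j + 2).choose (j + 1) * (j + 1) := by rw [← h1]; ring
      _ = (1 + j) ^ 1 * (m + 1 + j + 1).choose (1 + j) := by
          rw [pow_one, show m + 1 + j + 1 = m + j + 2 by omega, show (1:ℕ) + j = j + 1 by omega]
          ring
  | succ i hi IH =>
    intro j
    have key : (m + j + 1) * ((m + j).choose j * (m + 2) ^ (i + 1))
        ≤ (m + j + 1) * ((i + 1 + j) ^ (i + 1) * (m + (i + 1) + j + 1).choose (i + 1 + j)) := by
      have h1 : (m + j + 1) * (m + j).choose j = (m + j + 1).choose (j + 1) * (j + 1) :=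
        Nat.add_one_mul_choose_eq (m + j) j
      have hIH := IH (j + 1)
      have h2 : (j + 1) * (m + 2) ≤ (i + j + 1) * (m + j + 1) := by nlinarith
      calc (m + j + 1) * ((m + j).choose j * (m + 2) ^ (i + 1))
          = ((j + 1) * (m + 2)) * ((m + (j + 1)).choose (j + 1) * (m + 2) ^ i) := by
            rw [show (m + j + 1) * ((m + j).choose j * (m + 2) ^ (i + 1))
                = ((m + j + 1) * (m + j).choose j) * (m + 2) ^ (i + 1) by ring, h1,
              pow_succ]
            ring
        _ ≤ ((j + 1) * (m + 2)) * ((i + (j + 1)) ^ i * (m + i + (j + 1) + 1).choose (i + (j + 1))) :=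
            Nat.mul_le_mul_left _ hIH
        _ ≤ ((i + j + 1) * (m + j + 1)) * ((i + j + 1) ^ i * (m + i + j + 2).choose (i + j + 1)) := by
            have : i + (j + 1) = i + j + 1 := by omega
            have : m + i + (j + 1) + 1 = m + i + j + 2 := by omega
            rw [show i + (j+1) = i + j + 1 by omega, show m + i + (j+1) + 1 = m + i + j + 2 by omega]
            exact Nat.mul_le_mul h2 le_rfl
        _ = (m + j + 1) * ((i + 1 + j) ^ (i + 1) * (m + (i + 1) + j + 1).choose (i + 1 + j)) := by
            rw [show i + 1 + j = i + j + 1 by omega, show m + (i+1) + j + 1 = m + i + j + 2 by omega,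
              pow_succ]
            ring
    exact Nat.le_of_mul_le_mul_left key (by omega)

/-- Counting bound: number of size-`t` multisets with `count v = i` is at most the number of
size-`(t-i)` multisets on the remaining `n-1` vertices. -/
lemma stmt3_card_le (n t i : ℕ) (v : Fin n) (hit : i ≤ t) :
    (Finset.univ.filter
        (fun C : Sym (Fin n) t => Multiset.count v (C : Multiset (Fin n)) = i)).card
      ≤ Fintype.card (Sym {x : Fin n // x ≠ v} (t - i)) := by
  classical
  rw [← Fintype.card_coe]
  set S := Finset.univ.filter
      (fun C : Sym (Fin n) t => Multiset.count v (C : Multiset (Fin n)) = i) with hS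
  have hcount : ∀ C : Sym (Fin n) t, C ∈ S → Multiset.count v (C : Multiset (Fin n)) = i := by
    intro C hC
    simpa [hS] using hC
  have hrep : ∀ C : Sym (Fin n) t, C ∈ S →
      Multiset.replicate i v ≤ (C : Multiset (Fin n)) := by
    intro C hC
    exact Multiset.le_count_iff_replicate_le.mp (le_of_eq (hcount C hC).symm)
  have hnotmem : ∀ C : Sym (Fin n) t, C ∈ S →
      v ∉ ((C : Multiset (Fin n)) - Multiset.replicate i v) := by
    intro C hC
    rw [← Multiset.count_eq_zero, Multiset.count_sub, hcount C hC,
      Multiset.count_replicate_self]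
    omega
  let f : ↥S → Sym {x : Fin n // x ≠ v} (t - i) := fun C =>
    ⟨(((C.1 : Multiset (Fin n)) - Multiset.replicate i v)).attach.map
        (fun x => (⟨x.1, fun h => hnotmem C.1 C.2 (by have hx := x.2; rwa [h] at hx)⟩ : {x : Fin n // x ≠ v})), by
      rw [Multiset.card_map, Multiset.card_attach,
        Multiset.card_sub (hrep C.1 C.2), Sym.card_coe, Multiset.card_replicate]⟩
  have hrecover : ∀ C : ↥S, ((f C : Multiset {x : Fin n // x ≠ v}).map Subtype.val)
      = (C.1 : Multiset (Fin n)) - Multiset.replicate i v := by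
    intro C
    show ((((C.1 : Multiset (Fin n)) - Multiset.replicate i v)).attach.map _).map _ = _
    rw [Multiset.map_map]
    exact Multiset.attach_map_val _
  have hinj : Function.Injective f := by
    intro C1 C2 h
    have h2 : (C1.1 : Multiset (Fin n)) - Multiset.replicate i v
        = (C2.1 : Multiset (Fin n)) - Multiset.replicate i v := by
      rw [← hrecover C1, ← hrecover C2, h]
    have h3 : (C1.1 : Multiset (Fin n)) = (C2.1 : Multiset (Fin n)) := by
      have e1 := tsub_add_cancel_of_le (hrep C1.1 C1.2)
      have e2 := tsub_add_cancel_of_le (hrep C2.1 C2.2)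
      rw [← e1, ← e2, h2]
    exact Subtype.ext (Sym.coe_injective h3)
  exact Fintype.card_le_of_injective f hinj

/-- Under the uniform distribution on configurations of `t` pebbles on `n ≥ 2`
vertices (multisets of size `t` from `Fin n`), for any fixed vertex `v` and integer `i` with
`1 ≤ i ≤ t`, the probability that `v` receives exactly `i` pebbles is at most `(t/n)^i`. -/
theorem stmt3 (n t i : ℕ) (hn : 2 ≤ n) (hi : 1 ≤ i) (hit : i ≤ t) (v : Fin n) :
    ((Finset.univ.filter
        (fun C : Sym (Fin n) t => Multiset.count v (C : Multiset (Fin n)) = i)).card : ℚ)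
      / ((n + t - 1).choose t : ℚ)
    ≤ ((t : ℚ) / (n : ℚ)) ^ i := by
  have hcard := stmt3_card_le n t i v hit
  have hcs : Fintype.card (Sym {x : Fin n // x ≠ v} (t - i))
      = (n + t - i - 2).choose (t - i) := by
    rw [Sym.card_sym_eq_choose]
    congr 1
    simp only [Fintype.card_subtype_compl, Fintype.card_subtype_eq, Fintype.card_fin]
    omega
  -- key nat inequality
  obtain ⟨m, rfl⟩ : ∃ m, n = m + 2 := ⟨n - 2, by omega⟩
  obtain ⟨j, rfl⟩ : ∃ j, t = i + j := ⟨t - i, by omega⟩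
  have hkey := stmt3_key m i hi j
  have hnat : (Finset.univ.filter
        (fun C : Sym (Fin (m + 2)) (i + j) =>
          Multiset.count v (C : Multiset (Fin (m + 2))) = i)).card * (m + 2) ^ i
      ≤ (i + j) ^ i * (m + 2 + (i + j) - 1).choose (i + j) := by
    calc _ ≤ ((m + 2) + (i + j) - i - 2).choose ((i + j) - i) * (m + 2) ^ i :=
          Nat.mul_le_mul_right _ (le_trans hcard (le_of_eq hcs))
      _ = (m + j).choose j * (m + 2) ^ i := by congr 2 <;> omega
      _ ≤ (i + j) ^ i * (m + i + j + 1).choose (i + j) := hkey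
      _ = (i + j) ^ i * (m + 2 + (i + j) - 1).choose (i + j) := by congr 2; omega
  -- move to ℚ
  have hD : (0 : ℚ) < ((m + 2 + (i + j) - 1).choose (i + j) : ℚ) := by
    have : 0 < (m + 2 + (i + j) - 1).choose (i + j) := Nat.choose_pos (by omega)
    exact_mod_cast this
  have hn' : (0 : ℚ) < ((m + 2 : ℕ) : ℚ) := by positivity
  rw [div_pow, div_le_div_iff₀ hD (by positivity)]
  push_cast
  exact_mod_cast hnat
end

section
/- Under the uniform distribution on configurations of t pebbles on n vertices, for any fixed vertex v and integer i with 1 ≤ i ≤ t, the probability that v receives exactly i pebbles is at least ((n-1)/(n+t-1)) · ((t-i)/(n+t-i))^i. -/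
lemma key (m a : ℕ) : ∀ i : ℕ,
    (m+1) * a^i * ((m+a+i+1).choose (a+i)) ≤ (m+a).choose a * ((m+a+i+1) * (m+a+2)^i)
  | 0 => by
    have h := Nat.add_one_mul_choose_eq (m+a) m
    have h2 : (m+a).choose m = (m+a).choose a := by
      rw [Nat.add_comm m a]; exact Nat.choose_symm_add.symm
    have h3 : (m+a+1).choose a = (m+a+1).choose (m+1) := by
      have : m + a + 1 = a + (m+1) := by ring
      rw [this, Nat.choose_symm_add]
    simp only [pow_zero, mul_one, Nat.add_zero]
    rw [h3]
    refine le_of_eq ?_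
    calc (m+1) * (m+a+1).choose (m+1) = (m+a+1).choose (m+1) * (m+1) := by ring
      _ = (m+a).succ * (m+a).choose m := h.symm
      _ = (m+a).choose a * (m+a+1) := by rw [h2, Nat.succ_eq_add_one]; ring
  | (i+1) => by
    have IH := key m a i
    have hI : (m+a+i+2) * ((m+a+i+1).choose (a+i)) = ((m+a+i+2).choose (a+i+1)) * (a+i+1) := by
      have := Nat.add_one_mul_choose_eq (m+a+i+1) (a+i)
      simpa [Nat.succ_eq_add_one] using this
    have hX : 0 < (a+i+1) * (m+a+2) := by positivity
    refine Nat.le_of_mul_le_mul_right ?_ hX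
    have step : (m+a+i+1) * a ≤ (a+i+1) * (m+a+2) := by nlinarith
    calc (m+1) * a^(i+1) * ((m+a+i+2).choose (a+i+1)) * ((a+i+1) * (m+a+2))
        = (m+1) * a^i * ((m+a+i+2).choose (a+i+1) * (a+i+1)) * (a * (m+a+2)) := by ring
      _ = (m+1) * a^i * ((m+a+i+2) * ((m+a+i+1).choose (a+i))) * (a * (m+a+2)) := by rw [hI]
      _ = ((m+1) * a^i * ((m+a+i+1).choose (a+i))) * ((m+a+i+2) * (a * (m+a+2))) := by ring
      _ ≤ ((m+a).choose a * ((m+a+i+1) * (m+a+2)^i)) * ((m+a+i+2) * (a * (m+a+2))) :=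
          Nat.mul_le_mul_right _ IH
      _ = ((m+a).choose a * ((m+a+i+2) * (m+a+2)^i * (m+a+2))) * ((m+a+i+1) * a) := by ring
      _ ≤ ((m+a).choose a * ((m+a+i+2) * (m+a+2)^i * (m+a+2))) * ((a+i+1) * (m+a+2)) :=
          Nat.mul_le_mul_left _ step
      _ = (m+a).choose a * ((m+a+i+2) * (m+a+2)^(i+1)) * ((a+i+1) * (m+a+2)) := by ring


open Multiset in
def symCountEquiv {α : Type*} [DecidableEq α] (v : α) (t i : ℕ) (hit : i ≤ t) :
    {C : Sym α t // Multiset.count v (C : Multiset α) = i} ≃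
      {D : Sym α (t - i) // v ∉ (D : Multiset α)} where
  toFun C := ⟨Sym.cast
      (by have h : ((Sym.filterNe v C.1).fst : ℕ) = i := C.2; rw [h]) ((C.1).filterNe v).2,
    by
      intro h
      rw [Sym.coe_cast] at h
      have h' : v ∈ Multiset.filter (v ≠ ·) (C.1 : Multiset α) := h
      exact (Multiset.mem_filter.mp h').2 rfl⟩
  invFun D := ⟨(D.1).fill v ⟨i, by omega⟩,
    by
      rw [Sym.coe_fill, Sym.coe_replicate]
      simp [Multiset.count_eq_zero_of_notMem D.2]⟩
  left_inv C := by
    apply Subtype.ext; apply Sym.ext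
    rw [Sym.coe_fill, Sym.coe_replicate]
    simp only [Sym.coe_cast]
    ext b
    rw [Multiset.count_add, Multiset.count_replicate]
    show Multiset.count b (Multiset.filter (v ≠ ·) (C.1 : Multiset α)) + _ = _
    rw [Multiset.count_filter]
    by_cases hb : b = v
    · subst hb
      simp [C.2]
    · simp [hb, Ne.symm hb]
  right_inv D := by
    apply Subtype.ext; apply Sym.ext
    show Multiset.filter (v ≠ ·) ((Sym.fill v ⟨i, by omega⟩ D.1) : Multiset α) = _
    rw [Sym.coe_fill, Sym.coe_replicate, Multiset.filter_add]
    have hself : Multiset.filter (fun x => v ≠ x) (D.1 : Multiset α) = (D.1 : Multiset α) :=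
      Multiset.filter_eq_self.2 (fun b hb h => D.2 (by rw [← h] at hb; exact hb))
    rw [hself]
    have h0 : Multiset.filter (v ≠ ·) (Multiset.replicate (i : ℕ) v) = 0 := by
      rw [Multiset.filter_eq_nil.2]
      intro b hb
      rw [Multiset.eq_of_mem_replicate hb]
      simp
    rw [show ((⟨i, by omega⟩ : Fin (t+1)) : ℕ) = i from rfl, h0, add_zero]

def symAvoidEquiv {α : Type*} [DecidableEq α] (v : α) (k : ℕ) :
    {D : Sym α k // v ∉ (D : Multiset α)} ≃ Sym {w : α // w ≠ v} k where
  toFun D := ⟨(D.1 : Multiset α).attach.map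
      (fun x => ⟨x.1, fun h => D.2 (by have hx := x.2; rw [h] at hx; exact hx)⟩), by
        rw [Multiset.card_map, Multiset.card_attach]; exact D.1.2⟩
  invFun E := ⟨⟨(E : Multiset {w // w ≠ v}).map Subtype.val, by
        rw [Multiset.card_map]; exact E.2⟩,
      by
        intro h
        obtain ⟨⟨w, hw⟩, _, h2⟩ := Multiset.mem_map.mp h
        exact hw h2⟩
  left_inv D := by
    apply Subtype.ext; apply Sym.ext
    dsimp only
    show Multiset.map _ (Multiset.map _ _) = _
    rw [Multiset.map_map]
    exact (D.1 : Multiset α).attach_map_val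
  right_inv E := by
    apply Sym.ext
    apply Multiset.map_injective (Subtype.val_injective)
    dsimp only
    show Multiset.map _ (Multiset.map _ _) = _
    rw [Multiset.map_map]
    exact ((E : Multiset {w // w ≠ v}).map Subtype.val).attach_map_val

lemma count_card (n t i : ℕ) (hn : 2 ≤ n) (hit : i ≤ t) (v : Fin n) :
    (Finset.univ.filter
        (fun C : Sym (Fin n) t => Multiset.count v (C : Multiset (Fin n)) = i)).card
      = (n - 2 + (t - i)).choose (t - i) := by
  rw [← Fintype.card_subtype]
  rw [Fintype.card_congr ((symCountEquiv v t i hit).trans (symAvoidEquiv v (t - i)))]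
  rw [Sym.card_sym_eq_choose]
  have hcard : Fintype.card {w : Fin n // w ≠ v} = n - 1 := by
    simp [Fintype.card_subtype_compl]
  rw [hcard]
  congr 1
  omega

/-- Under the uniform distribution on configurations of `t` pebbles on `n ≥ 2`
vertices (multisets of size `t` from `Fin n`), for any fixed vertex `v` and integer `i` with
`1 ≤ i ≤ t`, the probability that `v` receives exactly `i` pebbles is at least
`((n-1)/(n+t-1)) · ((t-i)/(n+t-i))^i`. -/
theorem stmt4 (n t i : ℕ) (hn : 2 ≤ n) (hi : 1 ≤ i) (hit : i ≤ t) (v : Fin n) :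
    (((n - 1 : ℕ) : ℚ) / ((n + t - 1 : ℕ) : ℚ))
        * (((t - i : ℕ) : ℚ) / ((n + t - i : ℕ) : ℚ)) ^ i
    ≤ ((Finset.univ.filter
        (fun C : Sym (Fin n) t => Multiset.count v (C : Multiset (Fin n)) = i)).card : ℚ)
      / ((n + t - 1).choose t : ℚ) := by
  rw [count_card n t i hn hit v]
  obtain ⟨m, rfl⟩ : ∃ m, n = m + 2 := ⟨n - 2, by omega⟩
  obtain ⟨a, rfl⟩ : ∃ a, t = a + i := ⟨t - i, by omega⟩
  have e1 : m + 2 - 1 = m + 1 := by omega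
  have e2 : m + 2 + (a + i) - 1 = m + a + i + 1 := by omega
  have e3 : a + i - i = a := by omega
  have e4 : m + 2 + (a + i) - i = m + a + 2 := by omega
  have e5 : m + 2 - 2 + a = m + a := by omega
  rw [e1, e2, e3, e4, e5]
  have hpos1 : (0 : ℚ) < ((m + a + i + 1 : ℕ) : ℚ) * ((m + a + 2 : ℕ) : ℚ) ^ i := by
    positivity
  have hpos2 : (0 : ℚ) < ((m + a + i + 1).choose (a + i) : ℚ) := by
    exact_mod_cast Nat.choose_pos (by omega)
  rw [div_pow, div_mul_div_comm, div_le_div_iff₀ hpos1 hpos2]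
  exact_mod_cast key m a i
end

section
/- In the uniform model of configurations of t pebbles on n vertices, fix a subset S of vertices with |S| = s. Let X be the number of vertices in S receiving exactly 2 pebbles. Then E[X] ≤ s·(t/n)^2 and E[X] ≥ s·((n-1)/(n+t-1))·((t-2)/(n+t-2))^2, provided t ≥ 2. -/
/-!
A configuration with exactly two pebbles on `v` is a configuration of `t - 2` pebbles on the
other `n - 1` vertices with two copies of `v` added, so by linearity of expectation
`E[X] = s · C(n + t - 4, t - 2) / C(n + t - 1, t)
      = s · t (t - 1) (n - 1) / ((n + t - 1) (n + t - 2) (n + t - 3))`.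
Both bounds are then elementary comparisons of rational functions of `n` and `t`.
-/

open Multiset

theorem Multiset.filter_ne_add_replicate_count {α : Type*} [DecidableEq α] (v : α)
    (s : Multiset α) : s.filter (· ≠ v) + replicate (count v s) v = s := by
  rw [← filter_eq', add_comm]
  simpa only [ne_eq] using filter_add_not (· = v) s

open Nat in
theorem Nat.cast_choose_div_choose {K : Type*} [Field K] [CharZero K] (a b : ℕ) :
    ((a + b).choose b : K) / ((a + b + 3).choose (b + 2) : K)
      = (b + 2) * (b + 1) * (a + 1) / ((a + b + 3) * (a + b + 2) * (a + b + 1)) := by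
  rw [show a + b + 3 = b + 2 + (a + 1) by ring, Nat.add_comm a b, cast_add_choose,
    cast_add_choose, show b + 2 + (a + 1) = b + a + 2 + 1 by ring]
  have h₁ : ((b + a)! : K) ≠ 0 := Nat.cast_ne_zero.2 (factorial_ne_zero _)
  have h₂ : (b ! : K) ≠ 0 := Nat.cast_ne_zero.2 (factorial_ne_zero _)
  have h₃ : (a ! : K) ≠ 0 := Nat.cast_ne_zero.2 (factorial_ne_zero _)
  simp only [factorial_succ]
  push_cast
  field_simp
  ring

namespace Sym

variable {α : Type*} [DecidableEq α]

def countEqEquiv (v : α) (m j : ℕ) :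
    {C : Sym α (m + j) // count v (C : Multiset α) = j} ≃ {D : Sym α m // v ∉ D} where
  toFun C := ⟨⟨(C : Multiset α).filter (· ≠ v), by
      have h := congrArg Multiset.card (filter_ne_add_replicate_count v (C : Multiset α))
      rw [card_add, Multiset.card_replicate, C.2, Sym.card_coe] at h
      omega⟩, fun h => (Multiset.mem_filter.1 h).2 rfl⟩
  invFun D := ⟨D.1.append (Sym.replicate j v), by
      rw [coe_append, coe_replicate, count_add, count_replicate_self,
        count_eq_zero.2 (mem_coe.not.2 D.2), zero_add]⟩
  left_inv C := by
    apply Subtype.ext; apply Sym.ext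
    have h := filter_ne_add_replicate_count v (C : Multiset α)
    rwa [C.2] at h
  right_inv := by
    rintro ⟨D, hD⟩
    apply Subtype.ext; apply Sym.ext
    show ((D : Multiset α) + Multiset.replicate j v).filter (· ≠ v) = D
    have hD' : (D : Multiset α).filter (· ≠ v) = D :=
      filter_eq_self.2 fun x hx hxv => hD (hxv ▸ hx)
    rw [filter_add, hD', filter_eq_nil.2, add_zero]
    exact fun x hx => by simp [eq_of_mem_replicate hx]

def notMemEquiv (v : α) (m : ℕ) : {D : Sym α m // v ∉ D} ≃ Sym {x // x ≠ v} m where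
  toFun := fun ⟨D, hD⟩ => D.attach.map fun x => ⟨x.1, fun h => hD (h ▸ x.2)⟩
  invFun E := ⟨E.map Subtype.val, fun hv => by
    obtain ⟨x, _, hx⟩ := mem_map.1 hv
    exact x.2 hx⟩
  left_inv := fun ⟨D, _⟩ => Subtype.ext <| (map_map _ _ _).trans D.attach_map_coe
  right_inv E := map_injective Subtype.val_injective _ <| by
    rw [map_map]; exact (E.map Subtype.val).attach_map_coe

variable [Fintype α]

theorem card_count_eq (v : α) (m j : ℕ) :
    Fintype.card {C : Sym α (m + j) // count v (C : Multiset α) = j}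
      = Nat.multichoose (Fintype.card α - 1) m := by
  rw [Fintype.card_congr ((countEqEquiv v m j).trans (notMemEquiv v m)),
    card_sym_eq_multichoose, Fintype.card_subtype_compl, Fintype.card_subtype_eq]

theorem sum_card_filter_count_eq (S : Finset α) (m j : ℕ) :
    ∑ C : Sym α (m + j), (S.filter fun v => count v (C : Multiset α) = j).card
      = S.card * Nat.multichoose (Fintype.card α - 1) m := by
  simp_rw [Finset.card_filter]
  rw [Finset.sum_comm]
  simp_rw [← Finset.card_filter, ← Fintype.card_subtype, card_count_eq, Finset.sum_const,
    smul_eq_mul]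

theorem sum_card_filter_count_eq_two_div_card {K : Type*} [Field K] [CharZero K]
    (S : Finset α) {a : ℕ} (hα : Fintype.card α = a + 2) (b : ℕ) :
    (∑ C : Sym α (b + 2), ((S.filter fun v => count v (C : Multiset α) = 2).card : K))
        / Fintype.card (Sym α (b + 2))
      = S.card * ((b + 2) * (b + 1) * (a + 1) / ((a + b + 3) * (a + b + 2) * (a + b + 1))) := by
  rw [← Nat.cast_sum, sum_card_filter_count_eq, card_sym_eq_choose, hα, Nat.multichoose_eq,
    show a + 2 - 1 + b - 1 = a + b by omega, show a + 2 + (b + 2) - 1 = a + b + 3 by omega,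
    Nat.cast_mul, mul_div_assoc, Nat.cast_choose_div_choose]

end Sym

/- With `n = a + 2` vertices and `t = b + 2` pebbles, the ratio compared below is the
probability that a given vertex carries exactly two pebbles. -/

section

variable {K : Type*} [Field K] [LinearOrder K] [IsStrictOrderedRing K] {a b : K}

theorem pebble_ratio_le (ha : 0 ≤ a) (hb : 0 ≤ b) :
    (b + 2) * (b + 1) * (a + 1) / ((a + b + 3) * (a + b + 2) * (a + b + 1))
      ≤ ((b + 2) / (a + 2)) ^ 2 := by
  rw [div_pow, div_le_div_iff₀ (by positivity) (by positivity)]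
  have : (b + 1) * ((a + 2) * (a + 2) * (a + 1))
      ≤ (b + 2) * ((a + b + 3) * (a + b + 2) * (a + b + 1)) := by gcongr <;> linarith
  nlinarith

theorem le_pebble_ratio (ha : 0 ≤ a) (hb : 0 ≤ b) :
    (a + 1) / (a + b + 3) * (b / (a + b + 2)) ^ 2
      ≤ (b + 2) * (b + 1) * (a + 1) / ((a + b + 3) * (a + b + 2) * (a + b + 1)) := by
  rw [div_pow, div_mul_div_comm, div_le_div_iff₀ (by positivity) (by positivity)]
  have : b * b * (a + b + 1) ≤ (b + 2) * (b + 1) * (a + b + 2) := by gcongr <;> linarith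
  have hc : 0 ≤ (a + 1) * (a + b + 3) * (a + b + 2) := by positivity
  nlinarith [mul_le_mul_of_nonneg_left this hc]

end

/-- In the uniform model of configurations of `t ≥ 2` pebbles on `n ≥ 2` vertices,
fix a subset `S` of the vertices with `|S| = s`, and let `X` count the vertices of `S` receiving
exactly `2` pebbles.  Then `E[X] ≤ s·(t/n)²` and
`E[X] ≥ s·((n-1)/(n+t-1))·((t-2)/(n+t-2))²`. -/
theorem stmt8 (n t : ℕ) (hn : 2 ≤ n) (ht : 2 ≤ t) (S : Finset (Fin n)) :
    ((∑ C : Sym (Fin n) t,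
        ((S.filter (fun v => Multiset.count v (C : Multiset (Fin n)) = 2)).card : ℚ))
        / ((n + t - 1).choose t : ℚ)
      ≤ (S.card : ℚ) * ((t : ℚ) / (n : ℚ)) ^ 2)
    ∧ ((S.card : ℚ) * (((n - 1 : ℕ) : ℚ) / ((n + t - 1 : ℕ) : ℚ))
          * (((t - 2 : ℕ) : ℚ) / ((n + t - 2 : ℕ) : ℚ)) ^ 2
      ≤ (∑ C : Sym (Fin n) t,
          ((S.filter (fun v => Multiset.count v (C : Multiset (Fin n)) = 2)).card : ℚ))
        / ((n + t - 1).choose t : ℚ)) := by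
  obtain ⟨a, rfl⟩ : ∃ a, n = a + 2 := ⟨n - 2, by omega⟩
  obtain ⟨b, rfl⟩ : ∃ b, t = b + 2 := ⟨t - 2, by omega⟩
  have hE := Sym.sum_card_filter_count_eq_two_div_card (K := ℚ) S (Fintype.card_fin (a + 2)) b
  rw [Sym.card_sym_eq_choose, Fintype.card_fin] at hE
  rw [hE]
  have ha : (0 : ℚ) ≤ a := a.cast_nonneg
  have hb : (0 : ℚ) ≤ b := b.cast_nonneg
  constructor
  · calc _ ≤ (S.card : ℚ) * ((b + 2) / (a + 2)) ^ 2 := by gcongr; exact pebble_ratio_le ha hb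
      _ = _ := by push_cast; ring
  · rw [show a + 2 - 1 = a + 1 by omega, show b + 2 - 2 = b by omega,
      show a + 2 + (b + 2) - 1 = a + b + 3 by omega, show a + 2 + (b + 2) - 2 = a + b + 2 by omega,
      mul_assoc]
    push_cast
    gcongr
    exact le_pebble_ratio ha hb
end

section
/- Let C be a configuration of pebbles on the fuse graph F_{m,n} (a path v_1,…,v_m with n−m pendant vertices attached to v_m). Suppose at least 2^{m-1} vertices among the pendant vertices (sparks) each carry at least 2 pebbles. Then C is v_1-solvable: a pebble can be moved to v_1 by pebbling steps. -/
/-- A single pebbling step on a graph `G`: remove two pebbles from a vertex `u`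
and place one pebble on a neighbor `v` of `u`. -/
def PebStep {V : Type*} [DecidableEq V] (G : SimpleGraph V) (C C' : V → ℕ) : Prop :=
  ∃ u v : V, G.Adj u v ∧ 2 ≤ C u ∧
    C' = fun w => if w = u then C u - 2 else if w = v then C w + 1 else C w

/-- The fuse graph `F_{m,n}` on vertices `v_1, …, v_n` (0-indexed as `Fin n`):
a path `v_1 — v_2 — ⋯ — v_m` together with pendant vertices `v_{m+1}, …, v_n`
each adjacent to `v_m`. -/
def fuse (n m : ℕ) : SimpleGraph (Fin n) :=
  SimpleGraph.fromRel (fun i j =>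
    (i.val + 1 = j.val ∧ j.val ≤ m - 1) ∨ (m ≤ j.val ∧ i.val = m - 1))

lemma peb_one {n : ℕ} (G : SimpleGraph (Fin n)) {u v : Fin n} (huv : G.Adj u v)
    (C : Fin n → ℕ) (h2 : 2 ≤ C u) :
    PebStep G C (fun w => if w = u then C u - 2 else if w = v then C w + 1 else C w) :=
  ⟨u, v, huv, h2, rfl⟩

lemma peb_move {n : ℕ} (G : SimpleGraph (Fin n)) {u v : Fin n} (huv : G.Adj u v) :
    ∀ (t : ℕ) (C : Fin n → ℕ), 2 * t ≤ C u →
      ∃ C', Relation.ReflTransGen (PebStep G) C C' ∧ C v + t ≤ C' v := by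
  intro t
  induction t with
  | zero => intro C _; exact ⟨C, .refl, by omega⟩
  | succ t ih =>
    intro C hC
    have hne : u ≠ v := G.ne_of_adj huv
    set C1 : Fin n → ℕ :=
      fun w => if w = u then C u - 2 else if w = v then C w + 1 else C w with hC1
    have h1 : PebStep G C C1 := peb_one G huv C (by omega)
    have hu : C1 u = C u - 2 := by simp [hC1]
    have hv : C1 v = C v + 1 := by simp [hC1, hne.symm]
    obtain ⟨C', hrt, hle⟩ := ih C1 (by omega)
    exact ⟨C', .head h1 hrt, by omega⟩

lemma peb_sparks {n m : ℕ} (hm : 1 ≤ m) (hmn : m ≤ n) (S : Finset (Fin n)) :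
    ∀ C : Fin n → ℕ, (∀ v ∈ S, m ≤ v.val ∧ 2 ≤ C v) →
      ∃ C', Relation.ReflTransGen (PebStep (fuse n m)) C C' ∧
        C ⟨m - 1, by omega⟩ + S.card ≤ C' ⟨m - 1, by omega⟩ := by
  induction S using Finset.induction_on with
  | empty => intro C _; exact ⟨C, .refl, by simp⟩
  | @insert a S ha ih =>
    intro C hC
    have haa := hC a (Finset.mem_insert_self a S)
    have hane : a ≠ ⟨m - 1, by omega⟩ := by
      intro hEq
      have : a.val = m - 1 := by rw [hEq]
      omega
    have hadj : (fuse n m).Adj a ⟨m - 1, by omega⟩ := by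
      rw [fuse, SimpleGraph.fromRel_adj]
      exact ⟨hane, Or.inr (Or.inr ⟨haa.1, rfl⟩)⟩
    set vm : Fin n := ⟨m - 1, by omega⟩ with hvm
    set C1 : Fin n → ℕ :=
      fun w => if w = a then C a - 2 else if w = vm then C w + 1 else C w with hC1
    have h1 : PebStep (fuse n m) C C1 := peb_one _ hadj C haa.2
    have hvmval : C1 vm = C vm + 1 := by simp [hC1, hane.symm]
    obtain ⟨C', hrt, hle⟩ := ih C1 (by
      intro v hv
      have hvS := hC v (Finset.mem_insert_of_mem hv)
      have hva : v ≠ a := by rintro rfl; exact ha hv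
      have hvvm : v ≠ vm := by
        intro hEq
        have : v.val = m - 1 := by rw [hEq]
        omega
      have : C1 v = C v := by simp [hC1, hva, hvvm]
      omega)
    refine ⟨C', .head h1 hrt, ?_⟩
    rw [Finset.card_insert_of_notMem ha]
    omega

lemma peb_path {n m : ℕ} (hmn : m ≤ n) :
    ∀ (i : ℕ), i < m → ∀ (C : Fin n → ℕ) (u : Fin n), u.val = i → 2 ^ i ≤ C u →
      ∃ C', Relation.ReflTransGen (PebStep (fuse n m)) C C' ∧
        ∀ z : Fin n, z.val = 0 → 1 ≤ C' z := by
  intro i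
  induction i with
  | zero =>
    intro hi C u hu hC
    refine ⟨C, .refl, fun z hz => ?_⟩
    have : z = u := Fin.ext (by omega)
    subst this
    simpa using hC
  | succ i ih =>
    intro hi C u hu hC
    have hin : i < n := by omega
    set v : Fin n := ⟨i, hin⟩ with hv
    have hadj : (fuse n m).Adj u v := by
      rw [fuse, SimpleGraph.fromRel_adj]
      refine ⟨?_, Or.inr (Or.inl ⟨by simp [hv, hu], by omega⟩)⟩
      intro hEq
      have h3 : u.val = v.val := congrArg Fin.val hEq
      rw [hu] at h3
      exact absurd h3 (by simp [hv])
    obtain ⟨C1, hrt1, hle1⟩ := peb_move (fuse n m) hadj (2 ^ i) C (by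
      have h2 : 2 ^ (i + 1) = 2 * 2 ^ i := by ring
      omega)
    obtain ⟨C', hrt2, hle2⟩ := ih (by omega) C1 v rfl (by omega)
    exact ⟨C', hrt1.trans hrt2, hle2⟩

/-- If in a configuration `C` on the fuse graph `F_{m,n}` at least `2^{m-1}`
pendant (spark) vertices each carry at least `2` pebbles, then `C` is `v_1`-solvable:
a pebble can be moved to `v_1` by pebbling steps. -/
theorem stmt10 (n m : ℕ) (hm : 1 ≤ m) (hmn : m ≤ n) (C : Fin n → ℕ)
    (h : 2 ^ (m - 1) ≤
      (Finset.univ.filter (fun v : Fin n => m ≤ v.val ∧ 2 ≤ C v)).card) :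
    ∃ C', Relation.ReflTransGen (PebStep (fuse n m)) C C' ∧ 1 ≤ C' ⟨0, by omega⟩ := by
  obtain ⟨C1, hrt1, hle1⟩ := peb_sparks hm hmn
    (Finset.univ.filter (fun v : Fin n => m ≤ v.val ∧ 2 ≤ C v)) C (by
      intro v hv
      exact (Finset.mem_filter.mp hv).2)
  obtain ⟨C', hrt2, hle2⟩ := peb_path hmn (m - 1) (by omega) C1 ⟨m - 1, by omega⟩ rfl
    (by omega)
  exact ⟨C', hrt1.trans hrt2, hle2 _ rfl⟩
end

section
/- Let C be a configuration on the fuse graph F_{m,n} and let A = ∑_{j=m+1}^{n} ⌊C(v_j)/2⌋ be the number of pebbles that can be moved from the pendant vertices to v_m. If Y := ∑_{k=0}^{m-1} C(v_{k+1})/2^k + A/2^{m-1} < 1, then C is not v_1-solvable. -/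
def IsPebblingWeight {V : Type*} (G : SimpleGraph V) (φ : V → ℕ → ℝ) : Prop :=
  ∀ u v, G.Adj u v → ∀ x y, 2 ≤ x → φ u (x - 2) + φ v (y + 1) ≤ φ u x + φ v y

section SeparableWeight

variable {V : Type*} [Fintype V] [DecidableEq V] {G : SimpleGraph V} {φ : V → ℕ → ℝ}

theorem PebStep.sum_le (hφ : IsPebblingWeight G φ) {C C' : V → ℕ} (h : PebStep G C C') :
    ∑ w, φ w (C' w) ≤ ∑ w, φ w (C w) := by
  obtain ⟨u, v, hadj, hu, rfl⟩ := h
  have huv : u ≠ v := hadj.ne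
  rw [← sub_nonpos, ← Finset.sum_sub_distrib,
    Fintype.sum_eq_add u v huv fun w ⟨hwu, hwv⟩ => by simp [hwu, hwv]]
  simp only [if_true, if_neg huv.symm]
  linarith [hφ u v hadj (C u) (C v) hu]

theorem Relation.ReflTransGen.sum_pebStep_le (hφ : IsPebblingWeight G φ) {C C' : V → ℕ}
    (h : Relation.ReflTransGen (PebStep G) C C') :
    ∑ w, φ w (C' w) ≤ ∑ w, φ w (C w) := by
  induction h with
  | refl => exact le_rfl
  | tail _ hstep ih => exact (hstep.sum_le hφ).trans ih

end SeparableWeight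

noncomputable def fuseWeight {n : ℕ} (m : ℕ) (v : Fin n) (x : ℕ) : ℝ :=
  if v.val < m then x / 2 ^ v.val else (x / 2 : ℕ) / 2 ^ (m - 1)

section FuseWeight

variable {n m : ℕ}

theorem fuseWeight_of_lt {v : Fin n} (hv : v.val < m) (x : ℕ) :
    fuseWeight m v x = x / 2 ^ v.val := if_pos hv

theorem fuseWeight_of_le {v : Fin n} (hv : m ≤ v.val) (x : ℕ) :
    fuseWeight m v x = (x / 2 : ℕ) / 2 ^ (m - 1) := if_neg (not_lt.2 hv)

theorem fuseWeight_nonneg (v : Fin n) (x : ℕ) : 0 ≤ fuseWeight m v x := by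
  unfold fuseWeight; split_ifs <;> positivity

theorem isPebblingWeight_fuseWeight (hm : 0 < m) :
    IsPebblingWeight (fuse n m) (fuseWeight m) := by
  intro u v hadj x y hx
  obtain ⟨-, (⟨huv, hv⟩ | ⟨hv, hu⟩) | (⟨hvu, hu⟩ | ⟨hu, hv⟩)⟩ := hadj
  · simp only [fuseWeight_of_lt (show u.val < m by omega),
      fuseWeight_of_lt (show v.val < m by omega), ← huv, pow_succ]
    rw [div_mul_eq_div_div_swap, div_mul_eq_div_div_swap, ← add_div, ← add_div]
    refine div_le_div_of_nonneg_right ?_ (by positivity)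
    push_cast [Nat.cast_sub hx]
    linarith
  · simp only [fuseWeight_of_lt (show u.val < m by omega), fuseWeight_of_le hv, hu]
    rw [← add_div, ← add_div]
    refine div_le_div_of_nonneg_right ?_ (by positivity)
    exact_mod_cast (by omega : x - 2 + (y + 1) / 2 ≤ x + y / 2)
  · simp only [fuseWeight_of_lt (show u.val < m by omega),
      fuseWeight_of_lt (show v.val < m by omega), ← hvu, pow_succ]
    rw [div_mul_eq_div_div_swap, div_mul_eq_div_div_swap, ← add_div, ← add_div]
    refine div_le_div_of_nonneg_right ?_ (by positivity)
    push_cast [Nat.cast_sub hx]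
    linarith
  · simp only [fuseWeight_of_le hu, fuseWeight_of_lt (show v.val < m by omega), hv]
    rw [← add_div, ← add_div]
    refine div_le_div_of_nonneg_right ?_ (by positivity)
    exact_mod_cast (by omega : (x - 2) / 2 + (y + 1) ≤ x / 2 + y)

theorem sum_fuseWeight (D : Fin n → ℕ) :
    ∑ v, fuseWeight m v (D v) =
      (∑ v ∈ Finset.univ.filter (fun v : Fin n => v.val < m), (D v : ℝ) / 2 ^ v.val)
        + ((∑ v ∈ Finset.univ.filter (fun v : Fin n => m ≤ v.val), D v / 2 : ℕ) : ℝ)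
            / 2 ^ (m - 1) := by
  simp only [fuseWeight, Finset.sum_ite, not_lt, Nat.cast_sum, Finset.sum_div]

end FuseWeight

/-- Let `C` be a configuration on the fuse graph `F_{m,n}` and let
`A = ∑_{j=m+1}^n ⌊C(v_j)/2⌋` (pebbles movable from pendant vertices to `v_m`).
If `Y = ∑_{k=0}^{m-1} C(v_{k+1})/2^k + A/2^{m-1} < 1`, then `C` is not `v_1`-solvable. -/
theorem stmt12 (n m : ℕ) (hm : 1 ≤ m) (hmn : m ≤ n) (C : Fin n → ℕ)
    (hY : (∑ v ∈ Finset.univ.filter (fun v : Fin n => v.val < m), (C v : ℝ) / 2 ^ v.val)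
        + ((∑ v ∈ Finset.univ.filter (fun v : Fin n => m ≤ v.val), C v / 2 : ℕ) : ℝ)
            / 2 ^ (m - 1) < 1) :
    ¬ ∃ C', Relation.ReflTransGen (PebStep (fuse n m)) C C' ∧ 1 ≤ C' ⟨0, by omega⟩ := by
  rintro ⟨C', hsteps, hone⟩
  rw [← sum_fuseWeight] at hY
  have hroot : (1 : ℝ) ≤ fuseWeight m (⟨0, by omega⟩ : Fin n) (C' ⟨0, by omega⟩) := by
    rw [fuseWeight_of_lt hm]; simpa using hone
  have hC' : 1 ≤ ∑ v, fuseWeight m v (C' v) :=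
    hroot.trans (Finset.single_le_sum (fun v _ => fuseWeight_nonneg v _) (Finset.mem_univ _))
  linarith [hsteps.sum_pebStep_le (isPebblingWeight_fuseWeight hm)]
end

section
/- In the uniform model of configurations of t pebbles on the n vertices of F_{m,n} with t ≤ n/2, the expected value of A = ∑_{j=m+1}^{n} ⌊C(v_j)/2⌋ satisfies E[A] ≤ 2(n−m)·(t/n)², hence E[A] ≤ 2t²/n. -/
/-!
Since `⌊c / 2⌋ = #{k ≥ 1 | 2k ≤ c}`, the expectation of `⌊C(v) / 2⌋` is `∑_{k ≥ 1} Pr[C(v) ≥ 2k]`.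
Configurations with at least `j` pebbles on `v` are exactly those obtained from an arbitrary
configuration of `t - j` pebbles by adding `j` pebbles on `v`, so
`Pr[C(v) ≥ j] = multichoose n (t - j) / multichoose n t ≤ (t / n) ^ j`.
For `x = t / n ≤ 1/2` this gives `E⌊C(v) / 2⌋ ≤ x² ∑_k (x²)^k ≤ 2x²`; summing over the `n - m`
pendant vertices gives the first bound, and `n - m ≤ n` the second.
-/

open Finset

theorem Nat.succ_mul_multichoose_succ (n k : ℕ) :
    (k + 1) * n.multichoose (k + 1) = (n + k) * n.multichoose k := by
  rcases n with _ | n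
  · cases k <;> simp
  · rw [Nat.multichoose_eq, Nat.multichoose_eq, mul_comm,
      show n + 1 + (k + 1) - 1 = n + k + 1 by omega, show n + 1 + k - 1 = n + k by omega,
      ← Nat.add_one_mul_choose_eq]
    ring

theorem Nat.multichoose_mul_pow_le (n s j : ℕ) :
    n.multichoose s * n ^ j ≤ (s + j) ^ j * n.multichoose (s + j) := by
  induction j with
  | zero => simp
  | succ j ih =>
    have step : n.multichoose (s + j) * n ≤ (s + j + 1) * n.multichoose (s + j + 1) := by
      rw [Nat.succ_mul_multichoose_succ, mul_comm]
      exact Nat.mul_le_mul_right _ (Nat.le_add_right n _)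
    calc n.multichoose s * n ^ (j + 1) = n.multichoose s * n ^ j * n := by ring
      _ ≤ (s + j) ^ j * (n.multichoose (s + j) * n) := by
        rw [← mul_assoc]; exact Nat.mul_le_mul_right _ ih
      _ ≤ (s + j + 1) ^ j * ((s + j + 1) * n.multichoose (s + j + 1)) :=
        Nat.mul_le_mul (Nat.pow_le_pow_left (Nat.le_succ _) _) step
      _ = (s + (j + 1)) ^ (j + 1) * n.multichoose (s + (j + 1)) := by ring_nf

theorem Finset.sum_div_two_eq_sum_card_filter {ι : Type*} (s : Finset ι) (f : ι → ℕ) {t : ℕ}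
    (hf : ∀ x ∈ s, f x ≤ t) :
    ∑ x ∈ s, f x / 2 = ∑ i ∈ range t, #{x ∈ s | 2 * (i + 1) ≤ f x} := by
  simp_rw [card_filter]
  rw [sum_comm]
  refine sum_congr rfl fun x hx => ?_
  rw [← card_filter]
  have : {i ∈ range t | 2 * (i + 1) ≤ f x} = range (f x / 2) := by
    ext i
    have := hf x hx
    simp only [mem_filter, mem_range]
    omega
  rw [this, card_range]

theorem geom_sum_le_two {K : Type*} [Field K] [LinearOrder K] [IsStrictOrderedRing K] {y : K}
    (h0 : 0 ≤ y) (h1 : y ≤ 1 / 2) (k : ℕ) : ∑ i ∈ range k, y ^ i ≤ 2 := by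
  rw [range_eq_Ico]
  refine (geom_sum_Ico_le_of_lt_one h0 (by linarith)).trans ?_
  rw [pow_zero, div_le_iff₀ (by linarith)]
  linarith

section Sym

variable {α : Type*} [Fintype α] [DecidableEq α]

theorem Sym.card_filter_le_count (a : α) (s j : ℕ) :
    #{C : Sym α (s + j) | j ≤ Multiset.count a (C : Multiset α)} =
      (Fintype.card α).multichoose s := by
  rw [← Sym.card_sym_eq_multichoose α s, ← Finset.card_univ]
  symm
  refine Finset.card_nbij (fun B => B.append (Sym.replicate j a)) ?_ ?_ ?_
  · intro B _
    simp [Sym.coe_append, Sym.coe_replicate]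
  · intro B _ B' _ h
    exact (Sym.append_inj_left _).1 h
  · intro C hC
    obtain ⟨B, hB⟩ :=
      Multiset.le_iff_exists_add.1 (Multiset.le_count_iff_replicate_le.1 (by simpa using hC))
    have hcard : Multiset.card B = s := by
      have := congrArg Multiset.card hB
      rw [Sym.card_coe, Multiset.card_add, Multiset.card_replicate] at this
      omega
    refine ⟨Sym.mk B hcard, by simp, Sym.ext ?_⟩
    rw [Sym.coe_append, Sym.coe_replicate, hB, add_comm]
    rfl

theorem Sym.card_filter_le_count_le (a : α) (t j : ℕ) :
    (#{C : Sym α t | j ≤ Multiset.count a (C : Multiset α)} : ℚ) ≤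
      ((t : ℚ) / Fintype.card α) ^ j * (Fintype.card α).multichoose t := by
  rcases le_or_gt j t with hjt | htj
  · obtain ⟨s, rfl⟩ := Nat.exists_eq_add_of_le' hjt
    have hα : (0 : ℚ) < Fintype.card α := by exact_mod_cast Fintype.card_pos_iff.2 ⟨a⟩
    rw [Sym.card_filter_le_count, div_pow, div_mul_eq_mul_div, le_div_iff₀ (by positivity)]
    exact_mod_cast Nat.multichoose_mul_pow_le _ s j
  · have hempty : #{C : Sym α t | j ≤ Multiset.count a (C : Multiset α)} = 0 := by
      refine card_eq_zero.2 (filter_false_of_mem fun C _ => ?_)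
      have := Multiset.count_le_card a (C : Multiset α)
      rw [Sym.card_coe] at this
      omega
    rw [hempty, Nat.cast_zero]
    positivity

theorem Sym.sum_count_div_two_le (a : α) {t : ℕ} (ht : 2 * t ≤ Fintype.card α) :
    ((∑ C : Sym α t, Multiset.count a (C : Multiset α) / 2 : ℕ) : ℚ) ≤
      2 * ((t : ℚ) / Fintype.card α) ^ 2 * (Fintype.card α).multichoose t := by
  set x : ℚ := t / Fintype.card α
  set M : ℚ := ((Fintype.card α).multichoose t : ℚ)
  have hx : x ≤ 1 / 2 := by
    have hα : (0 : ℚ) < Fintype.card α := by exact_mod_cast Fintype.card_pos_iff.2 ⟨a⟩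
    rw [div_le_iff₀ hα]
    have : (2 * t : ℚ) ≤ Fintype.card α := by exact_mod_cast ht
    linarith
  rw [sum_div_two_eq_sum_card_filter univ _ fun C _ =>
    (Multiset.count_le_card a _).trans_eq C.card_coe]
  push_cast
  calc ∑ i ∈ range t, (#{C : Sym α t | 2 * (i + 1) ≤ Multiset.count a (C : Multiset α)} : ℚ)
      ≤ ∑ i ∈ range t, x ^ (2 * (i + 1)) * M :=
        sum_le_sum fun i _ => Sym.card_filter_le_count_le a t _
    _ = x ^ 2 * M * ∑ i ∈ range t, (x ^ 2) ^ i := by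
        rw [mul_sum]
        exact sum_congr rfl fun i _ => by ring
    _ ≤ x ^ 2 * M * 2 := by
        gcongr
        exact geom_sum_le_two (sq_nonneg x) (by nlinarith [show (0 : ℚ) ≤ x by positivity]) t
    _ = 2 * x ^ 2 * M := by ring

end Sym

theorem Fin.card_filter_le_val (n m : ℕ) : #{v : Fin n | m ≤ v.val} = n - m := by
  rw [← Nat.card_Ico, ← card_map Fin.valEmbedding]
  congr 1
  ext i
  simp only [mem_map, mem_filter, mem_univ, true_and, Fin.valEmbedding_apply, mem_Ico]
  exact ⟨fun ⟨v, hv, hvi⟩ => hvi ▸ ⟨hv, v.2⟩, fun ⟨hi, hin⟩ => ⟨⟨i, hin⟩, hi, rfl⟩⟩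

theorem stmt14_general (n m t : ℕ) (hmn : m ≤ n) (ht : 2 * t ≤ n) :
    ((∑ C : Sym (Fin n) t,
        ((∑ v ∈ Finset.univ.filter (fun v : Fin n => m ≤ v.val),
            Multiset.count v (C : Multiset (Fin n)) / 2 : ℕ) : ℚ))
        / ((n + t - 1).choose t : ℚ)
      ≤ 2 * ((n : ℚ) - m) * ((t : ℚ) / n) ^ 2)
    ∧ ((∑ C : Sym (Fin n) t,
        ((∑ v ∈ Finset.univ.filter (fun v : Fin n => m ≤ v.val),
            Multiset.count v (C : Multiset (Fin n)) / 2 : ℕ) : ℚ))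
        / ((n + t - 1).choose t : ℚ)
      ≤ 2 * (t : ℚ) ^ 2 / n) := by
  have hsum : (∑ C : Sym (Fin n) t,
        ((∑ v ∈ Finset.univ.filter (fun v : Fin n => m ≤ v.val),
            Multiset.count v (C : Multiset (Fin n)) / 2 : ℕ) : ℚ))
      ≤ 2 * ((n : ℚ) - m) * ((t : ℚ) / n) ^ 2 * ((n + t - 1).choose t : ℚ) := by
    rw [← Nat.multichoose_eq]
    simp_rw [Nat.cast_sum]
    rw [sum_comm]
    calc _ ≤ ∑ v ∈ Finset.univ.filter (fun v : Fin n => m ≤ v.val),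
          2 * ((t : ℚ) / n) ^ 2 * (n.multichoose t : ℚ) := sum_le_sum fun v _ => by
            simpa only [Fintype.card_fin, Nat.cast_sum] using
              Sym.sum_count_div_two_le v (by simpa only [Fintype.card_fin] using ht)
      _ = _ := by rw [sum_const, Fin.card_filter_le_val, nsmul_eq_mul, Nat.cast_sub hmn]; ring
  have hmn' : (m : ℚ) ≤ n := by exact_mod_cast hmn
  have hmean := div_le_of_le_mul₀ (by positivity)
    (mul_nonneg (mul_nonneg zero_le_two (sub_nonneg.2 hmn')) (sq_nonneg _)) hsum
  refine ⟨hmean, hmean.trans ?_⟩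
  rcases n.eq_zero_or_pos with rfl | hn
  · simp
  calc 2 * ((n : ℚ) - m) * ((t : ℚ) / n) ^ 2 ≤ 2 * n * ((t : ℚ) / n) ^ 2 := by
        gcongr
        exact sub_le_self _ m.cast_nonneg
    _ = 2 * (t : ℚ) ^ 2 / n := by field_simp

/-- In the uniform model of configurations of `t` pebbles on the `n` vertices
of the fuse graph `F_{m,n}` (pendant vertices are those with index `≥ m`, 0-indexed), with
`t ≤ n/2`, the expectation of `A = ∑_{j=m+1}^n ⌊C(v_j)/2⌋` satisfies
`E[A] ≤ 2(n−m)·(t/n)²`, and hence `E[A] ≤ 2t²/n`. -/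
theorem stmt14 (n m t : ℕ) (hm : 1 ≤ m) (hmn : m ≤ n) (ht : 2 * t ≤ n) :
    ((∑ C : Sym (Fin n) t,
        ((∑ v ∈ Finset.univ.filter (fun v : Fin n => m ≤ v.val),
            Multiset.count v (C : Multiset (Fin n)) / 2 : ℕ) : ℚ))
        / ((n + t - 1).choose t : ℚ)
      ≤ 2 * ((n : ℚ) - m) * ((t : ℚ) / n) ^ 2)
    ∧ ((∑ C : Sym (Fin n) t,
        ((∑ v ∈ Finset.univ.filter (fun v : Fin n => m ≤ v.val),
            Multiset.count v (C : Multiset (Fin n)) / 2 : ℕ) : ℚ))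
        / ((n + t - 1).choose t : ℚ)
      ≤ 2 * (t : ℚ) ^ 2 / n) :=
  stmt14_general n m t hmn ht
end
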